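/- Let H = X⊗I₂⊗X + I₂⊗X⊗X, let ρ₀ = ½|ψ₊⟩⟨ψ₊|⊗|+⟩⟨+| + ½|φ₊⟩⟨φ₊|⊗|−⟩⟨−| with ψ₊ = (|01⟩+|10⟩)/√2 and φ₊ = (|00⟩+|11⟩)/√2, and let ρ_t = exp(−itH) ρ₀ exp(itH). Then for every real t, the state ρ_t is classically correlated as measured on C, in the same fixed basis at all times: with P = |+⟩⟨+|, one has (I₄⊗P)ρ_t(I₄⊗P) + (I₄⊗(I₂−P))ρ_t(I₄⊗(I₂−P)) = ρ_t for all t ∈ ℝ (zero discord D_{AB|C} at all times). -/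

import Mathlib

/-!
STATEMENT 7: With `H = X⊗I₂⊗X + I₂⊗X⊗X`,
`ρ₀ = ½|ψ₊⟩⟨ψ₊|⊗|+⟩⟨+| + ½|φ₊⟩⟨φ₊|⊗|−⟩⟨−|` and `ρ_t = exp(−itH) ρ₀ exp(itH)`,
for every real `t` the von Neumann measurement on C with `P = |+⟩⟨+|` leaves `ρ_t`
unchanged: `(I₄⊗P)ρ_t(I₄⊗P) + (I₄⊗(I₂−P))ρ_t(I₄⊗(I₂−P)) = ρ_t` (zero discord
`D_{AB|C}` in the same fixed basis at all times).
-/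

open Matrix
open scoped Kronecker

noncomputable section

/-- The Pauli-x matrix. -/
def X : Matrix (Fin 2) (Fin 2) ℂ := !![0, 1; 1, 0]

/-- The 2×2 identity matrix. -/
def Id2 : Matrix (Fin 2) (Fin 2) ℂ := 1

/-- `H = X⊗I₂⊗X + I₂⊗X⊗X` (tensor factors ordered A, B, C). -/
def HH : Matrix (Fin 2 × Fin 2 × Fin 2) (Fin 2 × Fin 2 × Fin 2) ℂ :=
  X ⊗ₖ (Id2 ⊗ₖ X) + Id2 ⊗ₖ (X ⊗ₖ X)

/-- Standard basis vector `|0⟩` of ℂ². -/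
def ket0 : Fin 2 → ℂ := ![1, 0]

/-- Standard basis vector `|1⟩` of ℂ². -/
def ket1 : Fin 2 → ℂ := ![0, 1]

/-- `|ab⟩ = |a⟩⊗|b⟩ ∈ ℂ⁴` (Kronecker product of vectors). -/
def kron2 (u v : Fin 2 → ℂ) : Fin 2 × Fin 2 → ℂ := fun p => u p.1 * v p.2

/-- `|+⟩ = (|0⟩ + |1⟩)/√2`. -/
def plus : Fin 2 → ℂ := ((Real.sqrt 2 : ℂ))⁻¹ • (ket0 + ket1)

/-- `|−⟩ = (|0⟩ − |1⟩)/√2`. -/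
def minus : Fin 2 → ℂ := ((Real.sqrt 2 : ℂ))⁻¹ • (ket0 - ket1)

/-- Bell state `ψ₊ = (|01⟩ + |10⟩)/√2`. -/
def psiPlus : Fin 2 × Fin 2 → ℂ :=
  ((Real.sqrt 2 : ℂ))⁻¹ • (kron2 ket0 ket1 + kron2 ket1 ket0)

/-- Bell state `φ₊ = (|00⟩ + |11⟩)/√2`. -/
def phiPlus : Fin 2 × Fin 2 → ℂ :=
  ((Real.sqrt 2 : ℂ))⁻¹ • (kron2 ket0 ket0 + kron2 ket1 ket1)

/-- Tensor product of a two-qubit (AB) vector with a one-qubit (C) vector. -/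
def joinABC (w : Fin 2 × Fin 2 → ℂ) (v : Fin 2 → ℂ) : Fin 2 × Fin 2 × Fin 2 → ℂ :=
  fun p => w (p.1, p.2.1) * v p.2.2

/-- The outer product (projector) `|v⟩⟨v|`. -/
def outer {n : Type*} (v : n → ℂ) : Matrix n n ℂ := vecMulVec v (star v)

/-- `ρ₀ = ½|ψ₊⟩⟨ψ₊|⊗|+⟩⟨+| + ½|φ₊⟩⟨φ₊|⊗|−⟩⟨−|`. -/
def rho0 : Matrix (Fin 2 × Fin 2 × Fin 2) (Fin 2 × Fin 2 × Fin 2) ℂ :=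
  (1 / 2 : ℂ) • outer (joinABC psiPlus plus) + (1 / 2 : ℂ) • outer (joinABC phiPlus minus)

/-- `ρ_t = exp(−itH) ρ₀ exp(itH)`. -/
def rho (t : ℝ) : Matrix (Fin 2 × Fin 2 × Fin 2) (Fin 2 × Fin 2 × Fin 2) ℂ :=
  NormedSpace.exp ((-(Complex.I * (t : ℂ))) • HH) * rho0 *
    NormedSpace.exp ((Complex.I * (t : ℂ)) • HH)

/-- `I₄ ⊗ P`: the operator acting as `P` on subsystem C and trivially on A, B. -/
def embedC (P : Matrix (Fin 2) (Fin 2) ℂ) :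
    Matrix (Fin 2 × Fin 2 × Fin 2) (Fin 2 × Fin 2 × Fin 2) ℂ :=
  Id2 ⊗ₖ (Id2 ⊗ₖ P)

/-- The state after a von Neumann measurement `{P, I₂ − P}` on subsystem C. -/
def measC (P : Matrix (Fin 2) (Fin 2) ℂ)
    (ρ : Matrix (Fin 2 × Fin 2 × Fin 2) (Fin 2 × Fin 2 × Fin 2) ℂ) :
    Matrix (Fin 2 × Fin 2 × Fin 2) (Fin 2 × Fin 2 × Fin 2) ℂ :=
  embedC P * ρ * embedC P + embedC (Id2 - P) * ρ * embedC (Id2 - P)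

/-!
`P = |+⟩⟨+|` commutes with `X`, so `Q = I₄ ⊗ P` commutes with `H` and hence with both
propagators `exp(∓itH)`. The C-parts `|±⟩` of the two pure states in `ρ₀` are eigenvectors
of the hermitian `P`, so `Q` also commutes with `ρ₀`, and therefore with every `ρ_t`.
Finally, for an idempotent `Q` commuting with `ρ`, `QρQ + (1 − Q)ρ(1 − Q) = ρ`.
-/

theorem Matrix.commute_kronecker {m n α : Type*} [Fintype m] [Fintype n] [CommSemiring α]
    {A C : Matrix m m α} {B D : Matrix n n α} (hAC : Commute A C) (hBD : Commute B D) :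
    Commute (A ⊗ₖ B) (C ⊗ₖ D) := by
  simp only [Commute, SemiconjBy, ← mul_kronecker_mul, hAC.eq, hBD.eq]

section Outer

theorem isHermitian_outer {n : Type*} (v : n → ℂ) : (outer v).IsHermitian := by
  simp [IsHermitian, outer, conjTranspose_vecMulVec]

variable {n : Type*} [Fintype n]

theorem outer_mulVec (u v : n → ℂ) : outer u *ᵥ v = (star u ⬝ᵥ v) • u := by
  rw [outer, vecMulVec_mulVec, op_smul_eq_smul]

theorem isIdempotentElem_outer {u : n → ℂ} (hu : star u ⬝ᵥ u = 1) :
    IsIdempotentElem (outer u) := by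
  rw [IsIdempotentElem, outer, vecMulVec_mul_vecMulVec, hu, one_smul]

theorem commute_outer_of_mulVec_eq_smul {Q : Matrix n n ℂ} (hQ : Q.IsHermitian)
    {u : n → ℂ} {c : ℝ} (hu : Q *ᵥ u = (c : ℂ) • u) : Commute Q (outer u) := by
  have hleft : star u ᵥ* Q = (c : ℂ) • star u := by
    rw [← hQ.eq, ← star_mulVec, hu, star_smul, Complex.star_def, Complex.conj_ofReal]
  simp only [Commute, SemiconjBy, outer, mul_vecMulVec, vecMulVec_mul, hu, hleft,
    smul_vecMulVec, vecMulVec_smul]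

end Outer

theorem star_plus_dotProduct_plus : star plus ⬝ᵥ plus = 1 := by
  have hs : ((Real.sqrt 2 : ℂ))⁻¹ * ((Real.sqrt 2 : ℂ))⁻¹ = 2⁻¹ := by
    rw [← mul_inv, ← Complex.ofReal_mul, Real.mul_self_sqrt zero_le_two, Complex.ofReal_ofNat]
  norm_num [plus, ket0, ket1, dotProduct, Fin.sum_univ_two, hs]

theorem star_plus_dotProduct_minus : star plus ⬝ᵥ minus = 0 := by
  simp [plus, minus, ket0, ket1, dotProduct, Fin.sum_univ_two]

theorem isHermitian_X : X.IsHermitian := by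
  ext i j
  fin_cases i <;> fin_cases j <;> simp [X]

theorem X_mulVec_plus : X *ᵥ plus = plus := by
  ext i
  fin_cases i <;> simp [X, plus, ket0, ket1, mulVec, dotProduct, Fin.sum_univ_two]

theorem commute_X_outer_plus : Commute X (outer plus) :=
  commute_outer_of_mulVec_eq_smul (c := 1) isHermitian_X (by simpa using X_mulVec_plus)

theorem embedC_one : embedC 1 = 1 := by
  simp [embedC, Id2]

theorem embedC_sub (P R : Matrix (Fin 2) (Fin 2) ℂ) :
    embedC (P - R) = embedC P - embedC R := by
  ext i j
  simp [embedC, mul_sub]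

theorem embedC_mul (P R : Matrix (Fin 2) (Fin 2) ℂ) :
    embedC (P * R) = embedC P * embedC R := by
  simp [embedC, ← mul_kronecker_mul, Id2]

theorem isHermitian_embedC {P : Matrix (Fin 2) (Fin 2) ℂ} (hP : P.IsHermitian) :
    (embedC P).IsHermitian := by
  simp [IsHermitian, embedC, conjTranspose_kronecker, Id2, hP.eq]

theorem embedC_mulVec_joinABC (P : Matrix (Fin 2) (Fin 2) ℂ) (w : Fin 2 × Fin 2 → ℂ)
    (v : Fin 2 → ℂ) : embedC P *ᵥ joinABC w v = joinABC w (P *ᵥ v) := by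
  ext ⟨a, b, c⟩
  simp [embedC, mulVec, dotProduct, Fintype.sum_prod_type, Id2, one_apply, joinABC]
  ring

theorem joinABC_smul (w : Fin 2 × Fin 2 → ℂ) (c : ℂ) (v : Fin 2 → ℂ) :
    joinABC w (c • v) = c • joinABC w v := by
  ext p
  simp [joinABC, mul_left_comm]

theorem commute_embedC_HH {P : Matrix (Fin 2) (Fin 2) ℂ} (hP : Commute P X) :
    Commute (embedC P) HH :=
  (commute_kronecker (.one_left X) (commute_kronecker (.refl Id2) hP)).add_right
    (commute_kronecker (.refl Id2) (commute_kronecker (.one_left X) hP))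

theorem measC_eq_self_of_commute {P : Matrix (Fin 2) (Fin 2) ℂ} (hP : IsIdempotentElem P)
    {ρ : Matrix (Fin 2 × Fin 2 × Fin 2) (Fin 2 × Fin 2 × Fin 2) ℂ}
    (h : Commute (embedC P) ρ) : measC P ρ = ρ := by
  have hQρQ : embedC P * ρ * embedC P = embedC P * ρ := by
    rw [mul_assoc, ← h.eq, ← mul_assoc, ← embedC_mul, hP.eq]
  rw [measC, embedC_sub, Id2, embedC_one]
  simp only [sub_mul, mul_sub, one_mul, mul_one, hQρQ, ← h.eq]
  abel

theorem commute_embedC_rho {P : Matrix (Fin 2) (Fin 2) ℂ} (hH : Commute (embedC P) HH)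
    (h₀ : Commute (embedC P) rho0) (t : ℝ) : Commute (embedC P) (rho t) :=
  (((hH.smul_right _).exp_right).mul_right h₀).mul_right (hH.smul_right _).exp_right

theorem commute_embedC_rho0 : Commute (embedC (outer plus)) rho0 := by
  have hQ := isHermitian_embedC (isHermitian_outer plus)
  refine (Commute.smul_right ?_ _).add_right (Commute.smul_right ?_ _)
  · refine commute_outer_of_mulVec_eq_smul (c := 1) hQ ?_
    rw [embedC_mulVec_joinABC, outer_mulVec, star_plus_dotProduct_plus, joinABC_smul,
      Complex.ofReal_one]
  · refine commute_outer_of_mulVec_eq_smul (c := 0) hQ ?_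
    rw [embedC_mulVec_joinABC, outer_mulVec, star_plus_dotProduct_minus, joinABC_smul,
      Complex.ofReal_zero, zero_smul, zero_smul]

theorem classical_on_C_at_all_times :
    ∀ t : ℝ, measC (outer plus) (rho t) = rho t := fun t =>
  measC_eq_self_of_commute (isIdempotentElem_outer star_plus_dotProduct_plus)
    (commute_embedC_rho (commute_embedC_HH commute_X_outer_plus.symm) commute_embedC_rho0 t)

end
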